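/- arXiv:2602.16473 — 2 statements merged into one kernel-verified Lean document; each statement's English description precedes it below -/
import Mathlib

section
/- The C-RASP program for PT-3 (rules A := a, B := b, C := c, CA := #A, L1 := 1 ≤ CA, QB := B ∧ L1, CB := #QB, L2 := 1 ≤ CB, QC := C ∧ L2, CC := #QC, L3 := 1 ≤ CC, Out := L3) accepts a nonempty word w over {a,b,c} if and only if there exist indices i < j < k with w[i] = a, w[j] = b, w[k] = c. -/
/- Letters over Σ = {a, b, c} modeled as `Fin 3`: 0 = a, 1 = b, 2 = c.
   Positions are 1-indexed. -/

/-- Generic prefix count: number of positions `1 ≤ i ≤ j` satisfying `p`. -/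
def cnt (p : ℕ → Bool) (j : ℕ) : ℕ := ((Finset.Icc 1 j).filter (fun i => p i = true)).card

/-- `CA := #A` (`A := a`). -/
def cntA (w : List (Fin 3)) : ℕ → ℕ := cnt (fun i => decide (w[i - 1]? = some 0))

/-- `QB := (B ∧ L1)` with `L1 := 1 ≤ CA`. -/
def QB (w : List (Fin 3)) (i : ℕ) : Bool := decide (w[i - 1]? = some 1 ∧ 1 ≤ cntA w i)

/-- `CB := #QB`. -/
def cntQB (w : List (Fin 3)) : ℕ → ℕ := cnt (QB w)

/-- `QC := (C ∧ L2)` with `L2 := 1 ≤ CB`. -/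
def QC (w : List (Fin 3)) (i : ℕ) : Bool := decide (w[i - 1]? = some 2 ∧ 1 ≤ cntQB w i)

/-- `CC := #QC`. -/
def cntQC (w : List (Fin 3)) : ℕ → ℕ := cnt (QC w)

/-- Acceptance: `Out := L3 := (1 ≤ CC)` at the final position. -/
def acceptsPT3 (w : List (Fin 3)) : Prop := 1 ≤ cntQC w w.length

/-! Each threshold `1 ≤ #e` says that `e` held at some earlier or current position, so the
three nested counters unfold to a chain `i ≤ j ≤ k` of positions carrying `a`, `b`, `c`; the
inequalities are strict because a position carries only one letter. -/

theorem one_le_cnt_iff (p : ℕ → Bool) (j : ℕ) :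
    1 ≤ cnt p j ↔ ∃ i < j, p (i + 1) = true := by
  rw [cnt, Nat.one_le_iff_ne_zero, ← Nat.pos_iff_ne_zero, Finset.card_pos,
    Finset.filter_nonempty_iff]
  constructor
  · rintro ⟨i, hi, hp⟩
    rw [Finset.mem_Icc] at hi
    exact ⟨i - 1, by omega, by rwa [Nat.sub_add_cancel hi.1]⟩
  · rintro ⟨i, hi, hp⟩
    exact ⟨i + 1, Finset.mem_Icc.2 ⟨by omega, by omega⟩, hp⟩

section

variable (w : List (Fin 3))

theorem one_le_cntA_iff (j : ℕ) : 1 ≤ cntA w j ↔ ∃ i < j, w[i]? = some 0 := by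
  simp only [cntA, one_le_cnt_iff, Nat.add_sub_cancel, decide_eq_true_iff]

theorem one_le_cntQB_iff (k : ℕ) :
    1 ≤ cntQB w k ↔ ∃ i j, i < j ∧ j < k ∧ w[i]? = some 0 ∧ w[j]? = some 1 := by
  simp only [cntQB, one_le_cnt_iff, QB, Nat.add_sub_cancel, decide_eq_true_iff,
    one_le_cntA_iff]
  constructor
  · rintro ⟨j, hjk, hb, i, hij, ha⟩
    have : i ≠ j := by rintro rfl; simp_all
    exact ⟨i, j, by omega, hjk, ha, hb⟩
  · rintro ⟨i, j, hij, hjk, ha, hb⟩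
    exact ⟨j, hjk, hb, i, by omega, ha⟩

theorem one_le_cntQC_iff (n : ℕ) :
    1 ≤ cntQC w n ↔ ∃ i j k, i < j ∧ j < k ∧ k < n ∧
      w[i]? = some 0 ∧ w[j]? = some 1 ∧ w[k]? = some 2 := by
  simp only [cntQC, one_le_cnt_iff, QC, Nat.add_sub_cancel, decide_eq_true_iff,
    one_le_cntQB_iff]
  constructor
  · rintro ⟨k, hkn, hc, i, j, hij, hjk, ha, hb⟩
    have : j ≠ k := by rintro rfl; simp_all
    exact ⟨i, j, k, hij, by omega, hkn, ha, hb, hc⟩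
  · rintro ⟨i, j, k, hij, hjk, hkn, ha, hb, hc⟩
    exact ⟨k, hkn, hc, i, j, hij, by omega, ha, hb⟩

end

theorem pt3_correct_general (w : List (Fin 3)) :
    acceptsPT3 w ↔ ∃ i j k : ℕ, i < j ∧ j < k ∧
      w[i]? = some 0 ∧ w[j]? = some 1 ∧ w[k]? = some 2 := by
  rw [acceptsPT3, one_le_cntQC_iff]
  constructor
  · rintro ⟨i, j, k, hij, hjk, -, ha, hb, hc⟩
    exact ⟨i, j, k, hij, hjk, ha, hb, hc⟩
  · rintro ⟨i, j, k, hij, hjk, ha, hb, hc⟩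
    have hk : k < w.length := (List.getElem?_eq_some_iff.1 hc).1
    exact ⟨i, j, k, hij, hjk, hk, ha, hb, hc⟩

theorem pt3_correct (w : List (Fin 3)) (hw : w ≠ []) :
    acceptsPT3 w ↔ ∃ i j k : ℕ, i < j ∧ j < k ∧
      w[i]? = some 0 ∧ w[j]? = some 1 ∧ w[k]? = some 2 :=
  pt3_correct_general w
end

section
/- The C-RASP program for Tomita 7 given in the paper (rules B := b, A := a, Cb := #B, B1 := 1 ≤ Cb, B2 := A ∧ B1, C1 := #B2, B3 := 1 ≤ C1, B4 := B ∧ B3, CBAB := #B4, B1AB := 1 ≤ CBAB, B5 := A ∧ B1AB, CBadA := #B5, Out := (CBadA = 0)) accepts a nonempty word w over {a,b} if and only if w ∈ a*b*a*b*. -/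
/-- `Cb := #B` (`B := b`). -/
def cb (w : List Bool) : ℕ → ℕ := cnt (fun i => decide (w[i - 1]? = some false))

/-- `B2 := A ∧ B1` with `B1 := 1 ≤ Cb`. -/
def B2 (w : List Bool) (i : ℕ) : Bool := decide (w[i - 1]? = some true ∧ 1 ≤ cb w i)

/-- `C1 := #B2`. -/
def c1 (w : List Bool) : ℕ → ℕ := cnt (B2 w)

/-- `B4 := B ∧ B3` with `B3 := 1 ≤ C1`. -/
def B4 (w : List Bool) (i : ℕ) : Bool := decide (w[i - 1]? = some false ∧ 1 ≤ c1 w i)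

/-- `CBAB := #B4`. -/
def cBAB (w : List Bool) : ℕ → ℕ := cnt (B4 w)

/-- `B5 := A ∧ B1AB` with `B1AB := 1 ≤ CBAB`. -/
def B5 (w : List Bool) (i : ℕ) : Bool := decide (w[i - 1]? = some true ∧ 1 ≤ cBAB w i)

/-- `CBadA := #B5`. -/
def cBadA (w : List Bool) : ℕ → ℕ := cnt (B5 w)

/-- Acceptance: `Out := (CBadA = 0)` at the final position. -/
def acceptsTomita7 (w : List Bool) : Prop := cBadA w w.length = 0

lemma cnt_pos_iff (p : ℕ → Bool) (j : ℕ) :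
    1 ≤ cnt p j ↔ ∃ i, 1 ≤ i ∧ i ≤ j ∧ p i = true := by
  unfold cnt
  rw [Nat.one_le_iff_ne_zero, ← Nat.pos_iff_ne_zero, Finset.card_pos, Finset.filter_nonempty_iff]
  simp [Finset.mem_Icc]
  tauto

lemma cnt_eq_zero_iff (p : ℕ → Bool) (j : ℕ) :
    cnt p j = 0 ↔ ∀ i, 1 ≤ i → i ≤ j → ¬ (p i = true) := by
  unfold cnt
  rw [Finset.card_eq_zero, Finset.filter_eq_empty_iff]
  simp [Finset.mem_Icc]

def Pat (w : List Bool) : Prop := ∃ p q r s : ℕ, p < q ∧ q < r ∧ r < s ∧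
  w[p]? = some false ∧ w[q]? = some true ∧ w[r]? = some false ∧ w[s]? = some true

lemma get_lt {w : List Bool} {i : ℕ} {b : Bool} (h : w[i]? = some b) : i < w.length :=
  (List.getElem?_eq_some_iff.mp h).1

lemma get_append {w : List Bool} (x : Bool) {p : ℕ} {b : Bool} (h : w[p]? = some b) :
    (w ++ [x])[p]? = some b := by
  rw [List.getElem?_append, if_pos (get_lt h)]; exact h

def blk (i j k l : ℕ) : List Bool :=
  List.replicate i true ++ List.replicate j false ++
    List.replicate k true ++ List.replicate l false

lemma blk_length (i j k l : ℕ) : (blk i j k l).length = i + j + k + l := by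
  simp [blk]; omega

lemma blk_get (i j k l x : ℕ) :
    (blk i j k l)[x]? = if x < i then some true else if x < i + j then some false
      else if x < i + j + k then some true else if x < i + j + k + l then some false
      else none := by
  simp only [blk, List.getElem?_append, List.length_append, List.length_replicate, List.getElem?_replicate]
  split_ifs <;> first | rfl | omega

lemma blk_false {i j k l x : ℕ} (h : (blk i j k l)[x]? = some false) :
    (i ≤ x ∧ x < i + j) ∨ (i + j + k ≤ x ∧ x < i + j + k + l) := by
  rw [blk_get] at h
  split_ifs at h <;> first | omega | simp at h

lemma blk_true {i j k l x : ℕ} (h : (blk i j k l)[x]? = some true) :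
    x < i ∨ (i + j ≤ x ∧ x < i + j + k) := by
  rw [blk_get] at h
  split_ifs at h <;> first | omega | simp at h

lemma blk_not_pat (i j k l : ℕ) : ¬ Pat (blk i j k l) := by
  rintro ⟨p, q, r, s, hpq, hqr, hrs, hp, hq, hr, hs⟩
  have Hp := blk_false hp
  have Hq := blk_true hq
  have Hr := blk_false hr
  have Hs := blk_true hs
  omega

lemma not_pat_blocks {w : List Bool} (h : ¬ Pat w) : ∃ i j k l, w = blk i j k l := by
  induction w using List.reverseRecOn with
  | nil => exact ⟨0, 0, 0, 0, rfl⟩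
  | append_singleton w x ih =>
    have hw : ¬ Pat w := by
      rintro ⟨p, q, r, s, h1, h2, h3, h4, h5, h6, h7⟩
      exact h ⟨p, q, r, s, h1, h2, h3, get_append x h4, get_append x h5,
        get_append x h6, get_append x h7⟩
    obtain ⟨i, j, k, l, rfl⟩ := ih hw
    cases x with
    | false =>
      exact ⟨i, j, k, l + 1, by simp [blk, List.replicate_succ', List.append_assoc]⟩
    | true =>
      by_cases hl : l = 0
      · subst hl
        exact ⟨i, j, k + 1, 0, by simp [blk, List.replicate_succ', List.append_assoc]⟩
      · by_cases hj : j = 0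
        · subst hj
          refine ⟨i + k, l, 1, 0, ?_⟩
          simp only [blk]
          rw [List.replicate_add i k true]
          simp [List.append_assoc, List.replicate_succ']
        · by_cases hk : k = 0
          · subst hk
            refine ⟨i, j + l, 1, 0, ?_⟩
            simp only [blk]
            rw [List.replicate_add j l false]
            simp [List.append_assoc, List.replicate_succ']
          · exfalso
            apply h
            have hlen : (blk i j k l).length = i + j + k + l := blk_length i j k l
            have e : ∀ x', x' < i + j + k + l →
                (blk i j k l ++ [true])[x']? = (blk i j k l)[x']? := by
              intro x' hx'
              rw [List.getElem?_append, if_pos (by omega)]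
            refine ⟨i, i + j, i + j + k, i + j + k + l, by omega, by omega, by omega,
              ?_, ?_, ?_, ?_⟩
            · rw [e i (by omega), blk_get]; split_ifs <;> first | rfl | omega
            · rw [e (i+j) (by omega), blk_get]; split_ifs <;> first | rfl | omega
            · rw [e (i+j+k) (by omega), blk_get]; split_ifs <;> first | rfl | omega
            · rw [List.getElem?_append, if_neg (by omega)]
              simp [hlen]

lemma accepts_iff_not_pat (w : List Bool) : acceptsTomita7 w ↔ ¬ Pat w := by
  constructor
  · intro hacc hpat
    obtain ⟨p, q, r, s, hpq, hqr, hrs, hp, hq, hr, hs⟩ := hpat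
    have hB2 : B2 w (q + 1) = true := by
      simp only [B2, Nat.add_sub_cancel, decide_eq_true_eq]
      refine ⟨hq, (cnt_pos_iff _ _).mpr ⟨p + 1, by omega, by omega, by
        simp [Nat.add_sub_cancel, hp]⟩⟩
    have hB4 : B4 w (r + 1) = true := by
      simp only [B4, Nat.add_sub_cancel, decide_eq_true_eq]
      exact ⟨hr, (cnt_pos_iff _ _).mpr ⟨q + 1, by omega, by omega, hB2⟩⟩
    have hB5 : B5 w (s + 1) = true := by
      simp only [B5, Nat.add_sub_cancel, decide_eq_true_eq]
      exact ⟨hs, (cnt_pos_iff _ _).mpr ⟨r + 1, by omega, by omega, hB4⟩⟩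
    have hslt : s < w.length := get_lt hs
    exact (cnt_eq_zero_iff _ _).mp hacc (s + 1) (by omega) (by omega) hB5
  · intro hnp
    apply (cnt_eq_zero_iff _ _).mpr
    intro s' _ _ h5
    simp only [B5, decide_eq_true_eq] at h5
    obtain ⟨hsa, h5c⟩ := h5
    obtain ⟨r', hr1, hr2, h4⟩ := (cnt_pos_iff _ _).mp h5c
    simp only [B4, decide_eq_true_eq] at h4
    obtain ⟨hrb, h4c⟩ := h4
    obtain ⟨q', hq1, hq2, h2⟩ := (cnt_pos_iff _ _).mp h4c
    simp only [B2, decide_eq_true_eq] at h2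
    obtain ⟨hqa, h2c⟩ := h2
    obtain ⟨p', hp1, hp2, h0⟩ := (cnt_pos_iff _ _).mp h2c
    simp only [decide_eq_true_eq] at h0
    have hs1 : 1 ≤ s' := by omega
    have hpq : p' < q' := by
      rcases Nat.lt_or_ge p' q' with h | h
      · exact h
      · have : p' = q' := by omega
        rw [this, hqa] at h0; simp at h0
    have hqr : q' < r' := by
      rcases Nat.lt_or_ge q' r' with h | h
      · exact h
      · have : q' = r' := by omega
        rw [this, hrb] at hqa; simp at hqa
    have hrs : r' < s' := by
      rcases Nat.lt_or_ge r' s' with h | h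
      · exact h
      · have : r' = s' := by omega
        rw [this, hsa] at hrb; simp at hrb
    exact hnp ⟨p' - 1, q' - 1, r' - 1, s' - 1, by omega, by omega, by omega,
      h0, hqa, hrb, hsa⟩


theorem tomita7_correct (w : List Bool) (hw : w ≠ []) :
    acceptsTomita7 w ↔ ∃ i j k l : ℕ,
      w = List.replicate i true ++ List.replicate j false ++
          List.replicate k true ++ List.replicate l false := by
  rw [accepts_iff_not_pat]
  constructor
  · intro h
    obtain ⟨i, j, k, l, heq⟩ := not_pat_blocks h
    exact ⟨i, j, k, l, heq⟩
  · rintro ⟨i, j, k, l, rfl⟩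
    exact blk_not_pat i j k l
end
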